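/- Given a word U which is either empty or a valid RVT code word, the set of RVT code words W with L(W) = U is exactly: {R·U} ∪ {V T^{τ−1} followed by the suffix of U after its first τ symbols, prefixed appropriately : 1 ≤ τ ≤ (length of the initial run of R's in U)}, where replacing an initial block R^τ of U by V T^{τ−1} and prepending R yields W. In particular, if U begins with exactly ρ R's followed by a non-R symbol (or ends), there are exactly ρ + 1 words W with L(W) = U. -/

import Mathlib

/-- The three symbols of an RVT code word. -/
inductive RVT : Type
  | R | V | T
deriving DecidableEq, Repr

/-- Replace a leading run of `T`'s by `R`'s. -/
def deT : List RVT → List RVT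
  | RVT.T :: xs => RVT.R :: deT xs
  | xs => xs

/-- If the word begins with `V`, replace that `V` and the immediately
following `T`'s by `R`'s. -/
def reg : List RVT → List RVT
  | RVT.V :: xs => RVT.R :: deT xs
  | xs => xs

/-- The lifted word `L(W)`: remove the first symbol (an `R`), then replace a
leading maximal critical block `V Tᵗ` by `R^(t+1)`. -/
def lift (w : List RVT) : List RVT := reg w.tail

/-- Length of the leading run of `T`'s. -/
def countT : List RVT → ℕ
  | RVT.T :: xs => countT xs + 1
  | _ => 0

/-- Fueled version of the front-end recursion for the Puiseux characteristic
(Theorem PCfront): base case `[1]` on all-`R` words; given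
`PC(L(W)) = [l0; l1, ..., lg]`,
(A) if `W` begins `RR` then `PC(W) = [l0; l1+l0, ..., lg+l0]`;
(B) if `W` begins `R V T^t R` or `W = R V T^t` then
`PC(W) = [(t+2)l0; (t+3)l0, l1+l0, ..., lg+l0]`;
(C) if `W` begins `R V T^t V` then `PC(W) = [l1; l1+l0, ..., lg+l0]`. -/
def PCf : ℕ → List RVT → List ℕ
  | 0, _ => [1]
  | _ + 1, [] => [1]
  | fuel + 1, w@(_ :: rest) =>
    if w.all (· = RVT.R) then [1]
    else
      let p := PCf fuel (lift w)
      let l0 := p.headD 1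
      let tl := p.tail
      match rest with
      | RVT.V :: xs =>
        match xs.drop (countT xs) with
        | RVT.V :: _ => tl.headD 1 :: tl.map (· + l0)                                -- case (C)
        | _ => ((countT xs + 2) * l0) :: ((countT xs + 3) * l0) :: tl.map (· + l0)   -- case (B)
      | _ => l0 :: tl.map (· + l0)                                                   -- case (A)

/-- The Puiseux characteristic `PC(W)` computed by the front-end recursion. -/
def PC (w : List RVT) : List ℕ := PCf w.length w

/-- A valid RVT code word: begins with `R`, and `T` occurs only immediately
after a `V` or a `T`. -/
def ValidRVT (w : List RVT) : Prop :=
  w.head? = some RVT.R ∧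
  ∀ i, w[i + 1]? = some RVT.T → (w[i]? = some RVT.V ∨ w[i]? = some RVT.T)

/-- The function `E` on strings, with `E_T[a;b] = [a;a+b]`, `E_V[a;b] = [b;a+b]`,
`E_R = E_T`, and base value `E(empty) = [1;2]`; the leftmost symbol acts last. -/
def Efun : List RVT → ℕ × ℕ
  | [] => (1, 2)
  | RVT.V :: q => ((Efun q).2, (Efun q).1 + (Efun q).2)
  | _ :: q => ((Efun q).1, (Efun q).1 + (Efun q).2)

/-- The Euclidean-type recursion: `Euc(1,2)` is the empty word; for coprime
`a < b`, if `b < 2a` then `Euc(a,b) = V · Euc(b-a,a)`, and if `b > 2a` then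
`Euc(a,b) = T · Euc(a,b-a)`. -/
def Euc (a b : ℕ) : List RVT :=
  if a = 1 ∧ b = 2 then []
  else if _h1 : 0 < a ∧ a < b ∧ b < 2 * a then RVT.V :: Euc (b - a) a
  else if _h2 : 0 < a ∧ a < b ∧ 2 * a < b then RVT.T :: Euc a (b - a)
  else []
termination_by a + b
decreasing_by all_goals omega

/-!
Write a valid word as `W = R w`. If `w` is empty or starts with `R`, then `L(W) = w`; `w` cannot
start with `T`; and if `w = V T^k s` with `s` not starting with `T`, then `L(W) = R^(k+1) s`.
Conversely, every split `U = R^τ s` with `1 ≤ τ ≤ ρ` gives the preimage `R V T^(τ-1) s`, which is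
valid and lifts to `U` because in a valid word the letter after an `R` is never a `T`. These
preimages differ in their number of `T`'s, and none of them is `R U`, whose second letter is `R`.
-/

theorem List.le_length_takeWhile_eq_iff {α : Type*} [DecidableEq α] {a : α} {l : List α}
    {n : ℕ} : n ≤ (l.takeWhile (· = a)).length ↔ ∃ s, l = List.replicate n a ++ s := by
  induction l generalizing n with
  | nil => cases n <;> simp
  | cons x xs ih =>
    by_cases hx : x = a <;> cases n
    all_goals simp_all [List.replicate_succ, eq_comm]

open List RVT

def RVT.CanPrecede (a b : RVT) : Prop := b = T → a ≠ R

theorem validRVT_iff {w : List RVT} : ValidRVT w ↔ w.head? = some R ∧ w.IsChain CanPrecede := by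
  refine and_congr_right fun _ => ?_
  rw [isChain_iff_getElem]
  constructor
  · intro h i hi hT
    have := h i (by simp [hi, hT])
    simp only [getElem?_eq_getElem (Nat.lt_of_succ_lt hi), Option.some.injEq] at this
    rcases this with h' | h' <;> simp [h']
  · intro h i hT
    obtain ⟨hi, hT⟩ := List.getElem?_eq_some_iff.1 hT
    have := h i hi hT
    simp only [getElem?_eq_getElem (Nat.lt_of_succ_lt hi), Option.some.injEq]
    revert this
    cases w[i] <;> simp

theorem deT_of_head?_ne_T {s : List RVT} (hs : s.head? ≠ some T) : deT s = s := by
  rcases s with _ | ⟨_ | _ | _, s⟩ <;> simp_all [deT]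

theorem countT_of_head?_ne_T {s : List RVT} (hs : s.head? ≠ some T) : countT s = 0 := by
  rcases s with _ | ⟨_ | _ | _, s⟩ <;> simp_all [countT]

theorem deT_replicate_T_append (n : ℕ) {s : List RVT} (hs : s.head? ≠ some T) :
    deT (replicate n T ++ s) = replicate n R ++ s := by
  induction n with
  | zero => exact deT_of_head?_ne_T hs
  | succ n ih => simp [replicate_succ, deT, ih]

theorem countT_replicate_T_append (n : ℕ) {s : List RVT} (hs : s.head? ≠ some T) :
    countT (replicate n T ++ s) = n := by
  induction n with
  | zero => exact countT_of_head?_ne_T hs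
  | succ n ih => simp [replicate_succ, countT, ih]

theorem exists_eq_replicate_T_append (xs : List RVT) :
    ∃ n s, s.head? ≠ some T ∧ xs = replicate n T ++ s := by
  induction xs with
  | nil => exact ⟨0, [], by simp, rfl⟩
  | cons a xs ih =>
    by_cases ha : a = T
    · obtain ⟨n, s, hs, rfl⟩ := ih
      exact ⟨n + 1, s, hs, by simp [ha, replicate_succ]⟩
    · exact ⟨0, a :: xs, by simpa using ha, rfl⟩

theorem validRVT_R_cons {U : List RVT} (hU : U = [] ∨ ValidRVT U) : ValidRVT (R :: U) := by
  rw [validRVT_iff]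
  rcases hU with rfl | hU
  · simp
  · rw [validRVT_iff] at hU
    refine ⟨rfl, isChain_cons.2 ⟨fun y hy => ?_, hU.2⟩⟩
    obtain rfl : y = R := by simpa [hU.1] using hy.symm
    simp [CanPrecede]

theorem lift_R_cons {U : List RVT} (hU : U = [] ∨ ValidRVT U) : lift (R :: U) = U := by
  rcases hU with rfl | ⟨hU, -⟩
  · rfl
  · rcases U with _ | ⟨a, u⟩
    · rfl
    · obtain rfl : a = R := by simpa using hU
      rfl

theorem validRVT_R_V_replicate_T_append (k : ℕ) {s : List RVT} (hs : s.IsChain CanPrecede) :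
    ValidRVT (R :: V :: (replicate k T ++ s)) := by
  rw [validRVT_iff, isChain_cons_cons, isChain_cons]
  refine ⟨rfl, by simp [CanPrecede], fun _ _ _ => by simp, ?_⟩
  refine IsChain.append (isChain_replicate_of_rel _ (by simp [CanPrecede])) hs fun x hx _ _ _ => ?_
  simp [eq_of_mem_replicate (mem_of_mem_getLast? hx)]

theorem lift_R_V_replicate_T_append (k : ℕ) {s : List RVT} (hs : s.head? ≠ some T) :
    lift (R :: V :: (replicate k T ++ s)) = replicate (k + 1) R ++ s := by
  simp [lift, reg, deT_replicate_T_append k hs, replicate_succ]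

theorem isChain_and_head?_ne_T_of_validRVT_replicate_R_append {k : ℕ} {s : List RVT}
    (h : ValidRVT (replicate (k + 1) R ++ s)) : s.IsChain CanPrecede ∧ s.head? ≠ some T := by
  obtain ⟨-, hs, hlink⟩ := isChain_append.1 (validRVT_iff.1 h).2
  refine ⟨hs, fun hT => hlink R ?_ T hT rfl rfl⟩
  simp [getLast?_replicate]

theorem validRVT_cases {W : List RVT} (hW : ValidRVT W) :
    W = R :: lift W ∨ ∃ k s, s.head? ≠ some T ∧ W = R :: V :: (replicate k T ++ s) := by
  rcases W with _ | ⟨a, w⟩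
  · simp [ValidRVT] at hW
  obtain rfl : a = R := by simpa using hW.1
  rcases w with _ | ⟨_ | _ | _, ys⟩
  · exact .inl rfl
  · exact .inl rfl
  · obtain ⟨k, s, hs, rfl⟩ := exists_eq_replicate_T_append ys
    exact .inr ⟨k, s, hs, rfl⟩
  · rcases hW.2 0 rfl with h | h <;> simp at h

theorem head?_drop_ne_T {U : List RVT} (hU : U = [] ∨ ValidRVT U) {τ : ℕ} (h1 : 1 ≤ τ)
    (hτ : τ ≤ (U.takeWhile (· = R)).length) : (U.drop τ).head? ≠ some T := by
  obtain ⟨k, rfl⟩ := Nat.exists_eq_add_of_le' h1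
  obtain ⟨s, rfl⟩ := List.le_length_takeWhile_eq_iff.1 hτ
  have hvalid : ValidRVT (replicate (k + 1) R ++ s) := hU.resolve_left (by simp)
  simpa using (isChain_and_head?_ne_T_of_validRVT_replicate_R_append hvalid).2

def blockPreimage (U : List RVT) (τ : ℕ) : List RVT :=
  R :: V :: (replicate (τ - 1) T ++ U.drop τ)

theorem validRVT_and_lift_eq_iff {U : List RVT} (hU : U = [] ∨ ValidRVT U) (W : List RVT) :
    (ValidRVT W ∧ lift W = U) ↔
      (W = R :: U ∨ ∃ τ, 1 ≤ τ ∧ τ ≤ (U.takeWhile (· = R)).length ∧ W = blockPreimage U τ) := by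
  constructor
  · rintro ⟨hW, rfl⟩
    rcases validRVT_cases hW with h | ⟨k, s, hs, rfl⟩
    · exact .inl h
    · rw [lift_R_V_replicate_T_append k hs]
      refine .inr ⟨k + 1, by omega, List.le_length_takeWhile_eq_iff.2 ⟨s, rfl⟩, ?_⟩
      rw [blockPreimage, Nat.add_sub_cancel, drop_left' length_replicate]
  · rintro (rfl | ⟨τ, h1, hτ, rfl⟩)
    · exact ⟨validRVT_R_cons hU, lift_R_cons hU⟩
    · obtain ⟨k, rfl⟩ := Nat.exists_eq_add_of_le' h1
      obtain ⟨s, rfl⟩ := List.le_length_takeWhile_eq_iff.1 hτ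
      obtain ⟨hs, hsT⟩ :=
        isChain_and_head?_ne_T_of_validRVT_replicate_R_append (hU.resolve_left (by simp))
      rw [blockPreimage, Nat.add_sub_cancel, drop_left' length_replicate]
      exact ⟨validRVT_R_V_replicate_T_append k hs, lift_R_V_replicate_T_append k hsT⟩

theorem setOf_validRVT_and_lift_eq {U : List RVT} (hU : U = [] ∨ ValidRVT U) :
    {W | ValidRVT W ∧ lift W = U} =
      insert (R :: U) (blockPreimage U '' Set.Icc 1 (U.takeWhile (· = R)).length) := by
  ext W
  rw [Set.mem_ofPred_eq, validRVT_and_lift_eq_iff hU]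
  simp only [Set.mem_insert_iff, Set.mem_image, Set.mem_Icc, and_assoc, eq_comm]

theorem ncard_setOf_validRVT_and_lift_eq {U : List RVT} (hU : U = [] ∨ ValidRVT U) :
    {W | ValidRVT W ∧ lift W = U}.ncard = (U.takeWhile (· = R)).length + 1 := by
  rw [setOf_validRVT_and_lift_eq hU, Set.ncard_insert_of_notMem, Set.InjOn.ncard_image,
    Set.ncard_Icc_nat, Nat.add_sub_cancel]
  · intro a ⟨ha1, ha⟩ b ⟨hb1, hb⟩ hab
    have := congrArg (fun W => countT (W.drop 2)) hab
    simp only [blockPreimage, drop_succ_cons, drop_zero, countT_replicate_T_append _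
      (head?_drop_ne_T hU ha1 ha), countT_replicate_T_append _ (head?_drop_ne_T hU hb1 hb)] at this
    omega
  · rintro ⟨τ, ⟨h1, hτ⟩, h⟩
    obtain ⟨s, rfl⟩ := List.le_length_takeWhile_eq_iff.1 (h1.trans hτ)
    simp [blockPreimage] at h

/-- Description of the preimages of a word `U` (empty or valid) under the
lifting operation `L`: they are exactly `R · U` together with, for each
`1 ≤ τ ≤ ρ` (where `ρ` is the length of the initial run of `R`'s in `U`), the
word obtained by replacing the initial block `R^τ` of `U` by `V T^(τ−1)` and
prepending `R`. In particular there are exactly `ρ + 1` such words. -/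
theorem statement13 (U : List RVT) (hU : U = [] ∨ ValidRVT U) :
    (∀ W : List RVT, (ValidRVT W ∧ lift W = U) ↔
      (W = RVT.R :: U ∨
        ∃ τ, 1 ≤ τ ∧ τ ≤ (U.takeWhile (· = RVT.R)).length ∧
          W = RVT.R :: RVT.V :: (List.replicate (τ - 1) RVT.T ++ U.drop τ))) ∧
    Set.ncard {W : List RVT | ValidRVT W ∧ lift W = U}
      = (U.takeWhile (· = RVT.R)).length + 1 :=
  ⟨validRVT_and_lift_eq_iff hU, ncard_setOf_validRVT_and_lift_eq hU⟩
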